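/- Let C ≥ 2 and let ℓ : Δ^{C−1} → ℝ^C be a proper loss such that ℓ ∘ Π^{-1} is continuously differentiable on the interior of Δ̃^{C−1}, with ℓ_{−C} the vector of the first C−1 partial losses and ℓ_C the last partial loss, and define the projected conditional Bayes risk L̲̃(p̃) = L(Π^{-1}(p̃), Π^{-1}(p̃)). Then L̲̃ is twice differentiable on the interior of Δ̃^{C−1} and its Hessian satisfies H_{L̲̃}(p̃) = (I_{C−1} + 1_{C−1} p̃^T / p_C) J_{ℓ_{−C} ∘ Π^{-1}}(p̃), where p_C = 1 − Σ_{i=1}^{C−1} p̃_i, I_{C−1} is the identity matrix and 1_{C−1} the all-ones vector. -/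

import Mathlib

noncomputable section

/-- The probability simplex `Δ^C ⊆ ℝ^{d+1}` (here `C = d+1`). -/
def simplex (n : ℕ) : Set (Fin n → ℝ) :=
  {p | (∀ i, 0 ≤ p i) ∧ ∑ i, p i = 1}

/-- The interior of the projected probability simplex `Δ̃^{C-1} ⊆ ℝ^{C-1}` (here `C-1 = d`). -/
def projInterior (d : ℕ) : Set (Fin d → ℝ) :=
  {p | (∀ i, 0 < p i) ∧ ∑ i, p i < 1}

/-- The inverse projection `Π⁻¹ : Δ̃^{C-1} → Δ^{C-1}`,
`p̃ ↦ (p̃₁, …, p̃_{C-1}, 1 - ∑ i, p̃ i)`. -/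
def piInv (d : ℕ) (p : Fin d → ℝ) : Fin (d + 1) → ℝ :=
  Fin.snoc p (1 - ∑ i, p i)

/-- The conditional risk `L(p,q) = ∑ i, p i * ℓ_i(q)` of a loss `ℓ`. -/
def condRisk {n : ℕ} (ℓ : (Fin n → ℝ) → (Fin n → ℝ)) (p q : Fin n → ℝ) : ℝ :=
  ∑ i, p i * ℓ q i

/-- A loss is proper if `L(p,p) ≤ L(p,q)` on the simplex. -/
def Proper {n : ℕ} (ℓ : (Fin n → ℝ) → (Fin n → ℝ)) : Prop :=
  ∀ p ∈ simplex n, ∀ q ∈ simplex n, condRisk ℓ p p ≤ condRisk ℓ p q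

/-- The composition `ℓ ∘ Π⁻¹ : ℝ^{C-1} → ℝ^C`. -/
def lossComp (d : ℕ) (ℓ : (Fin (d + 1) → ℝ) → (Fin (d + 1) → ℝ)) :
    (Fin d → ℝ) → (Fin (d + 1) → ℝ) :=
  fun x => ℓ (piInv d x)

/-- The projected conditional Bayes risk `L̲̃(p̃) = L(Π⁻¹ p̃, Π⁻¹ p̃)`. -/
def projBayes (d : ℕ) (ℓ : (Fin (d + 1) → ℝ) → (Fin (d + 1) → ℝ)) :
    (Fin d → ℝ) → ℝ :=
  fun x => condRisk ℓ (piInv d x) (piInv d x)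

/-- The gradient `∇L̲̃` of the projected conditional Bayes risk. -/
def gradPB (d : ℕ) (ℓ : (Fin (d + 1) → ℝ) → (Fin (d + 1) → ℝ)) :
    (Fin d → ℝ) → (Fin d → ℝ) :=
  fun x i => fderiv ℝ (projBayes d ℓ) x (Pi.single i 1)

/-- The Hessian `H_{L̲̃}(x) i j = ∂_j ∂_i L̲̃ (x)` of the projected conditional Bayes risk. -/
def hessPB (d : ℕ) (ℓ : (Fin (d + 1) → ℝ) → (Fin (d + 1) → ℝ))
    (x : Fin d → ℝ) (i j : Fin d) : ℝ :=
  fderiv ℝ (gradPB d ℓ) x (Pi.single j 1) i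

/-- The canonical link `ψ̃ = -∇L̲̃`. -/
def canLink (d : ℕ) (ℓ : (Fin (d + 1) → ℝ) → (Fin (d + 1) → ℝ)) :
    (Fin d → ℝ) → (Fin d → ℝ) :=
  fun x i => -(gradPB d ℓ x i)

end


/-!
Properness makes `q ↦ L(p, q)` minimal at `q = p`, so its derivative vanishes there:
`∑ i, p i * ∂ℓ_i = 0`. By the envelope theorem the gradient of `L̲̃` then only sees the
variation of `Π⁻¹`, which gives `∇L̲̃ = ℓ₋C ∘ Π⁻¹ - (ℓ_C ∘ Π⁻¹) 1`. Differentiating once more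
and eliminating the derivative of `ℓ_C` through the same stationarity condition (divided by
`p_C > 0`) yields the Hessian.
-/

open Topology ContinuousLinearMap

theorem isOpen_projInterior (d : ℕ) : IsOpen (projInterior d) := by
  have h : projInterior d = (⋂ i, {p : Fin d → ℝ | 0 < p i}) ∩ {p | ∑ i, p i < 1} := by
    ext p; simp [projInterior, Set.mem_iInter]
  rw [h]
  exact (isOpen_iInter_of_finite fun i => isOpen_lt continuous_const (continuous_apply i)).inter
    (isOpen_lt (continuous_finsetSum _ fun i _ => continuous_apply i) continuous_const)

theorem sum_snoc_mul {d : ℕ} (a : Fin d → ℝ) (b : ℝ) (w : Fin (d + 1) → ℝ) :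
    ∑ i, (Fin.snoc a b : Fin (d + 1) → ℝ) i * w i
      = ∑ k, a k * w k.castSucc + b * w (Fin.last d) := by
  simp [Fin.sum_univ_castSucc]

theorem piInv_mem_simplex {d : ℕ} {x : Fin d → ℝ} (hx : x ∈ projInterior d) :
    piInv d x ∈ simplex (d + 1) := by
  refine ⟨Fin.lastCases ?_ fun k => ?_, by simp [piInv, Fin.sum_univ_castSucc]⟩
  · simpa [piInv] using hx.2.le
  · simpa [piInv] using (hx.1 k).le

def piInvDeriv (d : ℕ) : (Fin d → ℝ) →L[ℝ] (Fin (d + 1) → ℝ) :=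
  .pi (Fin.snoc (fun k => proj k) (-∑ k, proj k))

theorem piInvDeriv_apply {d : ℕ} (v : Fin d → ℝ) :
    piInvDeriv d v = Fin.snoc v (-∑ k, v k) := by
  ext i
  refine Fin.lastCases ?_ (fun k => ?_) i <;> simp [piInvDeriv]

theorem hasFDerivAt_piInv (d : ℕ) (x : Fin d → ℝ) :
    HasFDerivAt (piInv d) (piInvDeriv d) x := by
  refine hasFDerivAt_pi.2 fun i => Fin.lastCases ?_ (fun k => ?_) i
  · simpa [piInv, piInvDeriv] using
      ((HasFDerivAt.fun_sum fun k _ => hasFDerivAt_apply (𝕜 := ℝ) k x).const_sub 1)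
  · simpa [piInv, piInvDeriv] using hasFDerivAt_apply (𝕜 := ℝ) k x

section Envelope

variable {E : Type*} [NormedAddCommGroup E] [NormedSpace ℝ E] {ι : Type*} [Fintype ι]

theorem hasFDerivAt_sum_const_mul {g : E → ι → ℝ} {g' : E →L[ℝ] ι → ℝ} {x : E}
    (hg : HasFDerivAt g g' x) (c : ι → ℝ) :
    HasFDerivAt (fun y => ∑ i, c i * g y i) (∑ i, c i • (proj i).comp g') x :=
  HasFDerivAt.fun_sum fun i _ => ((hasFDerivAt_apply i (g x)).comp x hg).const_mul (c i)

theorem hasFDerivAt_sum_mul_of_stationary {p g : E → ι → ℝ} {p' g' : E →L[ℝ] ι → ℝ}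
    {x : E}
    (hp : HasFDerivAt p p' x) (hg : HasFDerivAt g g' x)
    (hstat : ∀ v, ∑ i, p x i * g' v i = 0) :
    HasFDerivAt (fun y => ∑ i, p y i * g y i) (∑ i, g x i • (proj i).comp p') x := by
  have h := HasFDerivAt.fun_sum (u := Finset.univ) fun i _ =>
    ((hasFDerivAt_apply i (p x)).comp x hp).mul ((hasFDerivAt_apply i (g x)).comp x hg)
  refine h.congr_fderiv (ContinuousLinearMap.ext fun v => ?_)
  simp [Finset.sum_add_distrib, hstat v]

end Envelope

section ProperLoss

variable {d : ℕ} {ℓ : (Fin (d + 1) → ℝ) → (Fin (d + 1) → ℝ)}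

theorem Proper.sum_piInv_mul_fderiv_eq_zero (hproper : Proper ℓ) {x : Fin d → ℝ}
    (hx : x ∈ projInterior d) (hf : DifferentiableAt ℝ (lossComp d ℓ) x) (v : Fin d → ℝ) :
    ∑ i, piInv d x i * fderiv ℝ (lossComp d ℓ) x v i = 0 := by
  have hmin : IsLocalMin (fun y => ∑ i, piInv d x i * lossComp d ℓ y i) x := by
    filter_upwards [(isOpen_projInterior d).mem_nhds hx] with y hy
    exact hproper _ (piInv_mem_simplex hx) _ (piInv_mem_simplex hy)
  simpa using congrArg (· v)
    (hmin.hasFDerivAt_eq_zero (hasFDerivAt_sum_const_mul hf.hasFDerivAt (piInv d x)))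

theorem Proper.hasFDerivAt_projBayes (hproper : Proper ℓ) {x : Fin d → ℝ}
    (hx : x ∈ projInterior d) (hf : DifferentiableAt ℝ (lossComp d ℓ) x) :
    HasFDerivAt (projBayes d ℓ) (∑ i, lossComp d ℓ x i • proj i ∘L piInvDeriv d) x :=
  hasFDerivAt_sum_mul_of_stationary (hasFDerivAt_piInv d x) hf.hasFDerivAt
    (hproper.sum_piInv_mul_fderiv_eq_zero hx hf)

theorem Proper.gradPB_eq (hproper : Proper ℓ) {x : Fin d → ℝ} (hx : x ∈ projInterior d)
    (hf : DifferentiableAt ℝ (lossComp d ℓ) x) :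
    gradPB d ℓ x = fun j => lossComp d ℓ x j.castSucc - lossComp d ℓ x (Fin.last d) := by
  funext j
  simp [gradPB, (hproper.hasFDerivAt_projBayes hx hf).fderiv, piInvDeriv_apply,
    Fin.sum_univ_castSucc, Pi.single_apply, ← sub_eq_add_neg]

theorem Proper.hasFDerivAt_gradPB (hproper : Proper ℓ) {x : Fin d → ℝ}
    (hx : x ∈ projInterior d)
    (hf : ∀ y ∈ projInterior d, DifferentiableAt ℝ (lossComp d ℓ) y) :
    HasFDerivAt (gradPB d ℓ)
      (.pi fun i => proj i.castSucc ∘L fderiv ℝ (lossComp d ℓ) x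
        - proj (Fin.last d) ∘L fderiv ℝ (lossComp d ℓ) x) x := by
  have hgrad : gradPB d ℓ =ᶠ[𝓝 x]
      fun y i => lossComp d ℓ y i.castSucc - lossComp d ℓ y (Fin.last d) := by
    filter_upwards [(isOpen_projInterior d).mem_nhds hx] with y hy
    exact hproper.gradPB_eq hy (hf y hy)
  refine HasFDerivAt.congr_of_eventuallyEq (hasFDerivAt_pi.2 fun i => ?_) hgrad
  have hcomp := fun k => (hasFDerivAt_apply k (lossComp d ℓ x)).comp x (hf x hx).hasFDerivAt
  exact (hcomp i.castSucc).sub (hcomp (Fin.last d))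

theorem Proper.fderiv_lossComp_last (hproper : Proper ℓ) {x : Fin d → ℝ}
    (hx : x ∈ projInterior d) (hf : DifferentiableAt ℝ (lossComp d ℓ) x) (v : Fin d → ℝ) :
    fderiv ℝ (lossComp d ℓ) x v (Fin.last d)
      = -(∑ k, x k * fderiv ℝ (lossComp d ℓ) x v k.castSucc) / (1 - ∑ k, x k) := by
  have hstat := hproper.sum_piInv_mul_fderiv_eq_zero hx hf v
  rw [piInv, sum_snoc_mul] at hstat
  have hpos : 0 < 1 - ∑ k, x k := sub_pos.2 hx.2
  field_simp
  linarith

end ProperLoss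

theorem stmt_6_general (d : ℕ)
    (ℓ : (Fin (d + 1) → ℝ) → (Fin (d + 1) → ℝ)) (hproper : Proper ℓ)
    (hdiff : ∀ pt ∈ projInterior d, ContDiffAt ℝ 1 (lossComp d ℓ) pt) :
    ∀ pt ∈ projInterior d,
      DifferentiableAt ℝ (projBayes d ℓ) pt ∧
      DifferentiableAt ℝ (gradPB d ℓ) pt ∧
      ∀ i j : Fin d,
        hessPB d ℓ pt i j
          = fderiv ℝ (lossComp d ℓ) pt (Pi.single j 1) i.castSucc
            + (∑ k : Fin d,
                pt k * fderiv ℝ (lossComp d ℓ) pt (Pi.single j 1) k.castSucc)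
              / (1 - ∑ k, pt k) := by
  intro pt hpt
  have hf : ∀ y ∈ projInterior d, DifferentiableAt ℝ (lossComp d ℓ) y :=
    fun y hy => (hdiff y hy).differentiableAt one_ne_zero
  have hH := hproper.hasFDerivAt_gradPB hpt hf
  refine ⟨(hproper.hasFDerivAt_projBayes hpt (hf pt hpt)).differentiableAt,
    hH.differentiableAt, fun i j => ?_⟩
  simp only [hessPB, hH.fderiv, pi_apply, comp_apply, sub_apply, proj_apply,
    hproper.fderiv_lossComp_last hpt (hf pt hpt)]
  ring

/-- For a proper loss with `ℓ ∘ Π⁻¹` continuously differentiable on the interior of the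
projected simplex, `L̲̃` is twice differentiable there, with Hessian
`H_{L̲̃}(pt) = (I_{C-1} + 1_{C-1} ptᵀ / p_C) J_{ℓ₋C ∘ Π⁻¹}(pt)`, where
`p_C = 1 - ∑ i, pt i`. -/
theorem stmt_6 (d : ℕ) (hd : 1 ≤ d)
    (ℓ : (Fin (d + 1) → ℝ) → (Fin (d + 1) → ℝ)) (hproper : Proper ℓ)
    (hdiff : ∀ pt ∈ projInterior d, ContDiffAt ℝ 1 (lossComp d ℓ) pt) :
    ∀ pt ∈ projInterior d,
      DifferentiableAt ℝ (projBayes d ℓ) pt ∧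
      DifferentiableAt ℝ (gradPB d ℓ) pt ∧
      ∀ i j : Fin d,
        hessPB d ℓ pt i j
          = fderiv ℝ (lossComp d ℓ) pt (Pi.single j 1) i.castSucc
            + (∑ k : Fin d,
                pt k * fderiv ℝ (lossComp d ℓ) pt (Pi.single j 1) k.castSucc)
              / (1 - ∑ k, pt k) :=
  stmt_6_general d ℓ hproper hdiff
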